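/- arXiv:2302.11847 — 7 statements merged into one kernel-verified Lean document; each statement's English description precedes it below -/
import Mathlib

section
/- Suppose H : 𝒫(ℝ^d) → [0,∞] is monotone and finitely subadditive. If (f_n) is a sequence of nonnegative functions on ℝ^d converging quasi-uniformly to f, then ∫f dH ≤ liminf_{n→∞} ∫f_n dH. -/
open MeasureTheory Filter Set Topology
open scoped ENNReal

/-- The Choquet integral `∫ f dH = ∫₀^∞ H({f > t}) dt` of `f : α → [0,∞]`
with respect to a set function `H`. -/
noncomputable def choquet {α : Type*} (H : Set α → ℝ≥0∞) (f : α → ℝ≥0∞) : ℝ≥0∞ :=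
  ∫⁻ t in Set.Ioi (0 : ℝ), H {x | ENNReal.ofReal t < f x}

/-- A set function is monotone if `E ⊆ F` implies `H E ≤ H F`. -/
def MonotoneSF {α : Type*} (H : Set α → ℝ≥0∞) : Prop :=
  ∀ ⦃E F : Set α⦄, E ⊆ F → H E ≤ H F

/-- Strong subadditivity: `H(E ∩ F) + H(E ∪ F) ≤ H(E) + H(F)`. -/
def StronglySubadditive {α : Type*} (H : Set α → ℝ≥0∞) : Prop :=
  ∀ E F : Set α, H (E ∩ F) + H (E ∪ F) ≤ H E + H F

def FinitelySubadditive {α : Type*} (H : Set α → ℝ≥0∞) : Prop :=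
  ∀ E F : Set α, H (E ∪ F) ≤ H E + H F

def CountablySubadditive {α : Type*} (H : Set α → ℝ≥0∞) : Prop :=
  ∀ E : ℕ → Set α, H (⋃ n, E n) ≤ ∑' n, H (E n)

/-- Quasi-uniform convergence of a sequence of real-valued functions:
for every `ε > 0` there is a set `E` with `H E ≤ ε` such that the sequence
converges uniformly on the complement of `E`. -/
def QUTendsto {α : Type*} (H : Set α → ℝ≥0∞) (f : ℕ → α → ℝ) (g : α → ℝ) : Prop :=
  ∀ ε : ℝ, 0 < ε → ∃ E : Set α, H E ≤ ENNReal.ofReal ε ∧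
    TendstoUniformlyOn f g Filter.atTop Eᶜ

/-- Quasi-uniform convergence of a sequence of `[0,∞]`-valued functions: for every
`ε > 0` there is a set `E` with `H E ≤ ε` such that the functions are finite on the
complement of `E` and converge uniformly to `g` there. -/
def QUTendstoENN {α : Type*} (H : Set α → ℝ≥0∞) (f : ℕ → α → ℝ≥0∞) (g : α → ℝ≥0∞) : Prop :=
  ∀ ε : ℝ, 0 < ε → ∃ E : Set α, H E ≤ ENNReal.ofReal ε ∧
    (∀ n, ∀ x ∉ E, f n x ≠ ⊤) ∧ (∀ x ∉ E, g x ≠ ⊤) ∧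
    TendstoUniformlyOn (fun n x => (f n x).toReal) (fun x => (g x).toReal) Filter.atTop Eᶜ

/-- A function `f : α → [-∞,∞]` is quasicontinuous with respect to `H` if for every
`ε > 0` there is an open set `ω` with `H ω ≤ ε` such that `f` is finite and continuous
on the complement of `ω`. -/
def QuasicontinuousE {α : Type*} [TopologicalSpace α] (H : Set α → ℝ≥0∞) (f : α → EReal) : Prop :=
  ∀ ε : ℝ, 0 < ε → ∃ ω : Set α, IsOpen ω ∧ H ω ≤ ENNReal.ofReal ε ∧
    (∀ x ∉ ω, f x ≠ ⊤ ∧ f x ≠ ⊥) ∧ ContinuousOn f ωᶜ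

/-- Quasicontinuity of a real-valued function. -/
def QuasicontinuousR {α : Type*} [TopologicalSpace α] (H : Set α → ℝ≥0∞) (f : α → ℝ) : Prop :=
  ∀ ε : ℝ, 0 < ε → ∃ ω : Set α, IsOpen ω ∧ H ω ≤ ENNReal.ofReal ε ∧ ContinuousOn f ωᶜ

/-- Quasicontinuity of a `[0,∞]`-valued function: finite and continuous off an open
set of small capacity. -/
def QuasicontinuousENN {α : Type*} [TopologicalSpace α] (H : Set α → ℝ≥0∞) (f : α → ℝ≥0∞) :
    Prop :=
  ∀ ε : ℝ, 0 < ε → ∃ ω : Set α, IsOpen ω ∧ H ω ≤ ENNReal.ofReal ε ∧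
    (∀ x ∉ ω, f x ≠ ⊤) ∧ ContinuousOn f ωᶜ

/-- Evanescence: for every open `U` with `H U < ∞` and every closed `F ⊆ U`,
`H(F \ B_r) → 0` as `r → ∞`. -/
def Evanescent {d : ℕ} (H : Set (EuclideanSpace ℝ (Fin d)) → ℝ≥0∞) : Prop :=
  ∀ U : Set (EuclideanSpace ℝ (Fin d)), IsOpen U → H U < ⊤ →
    ∀ F : Set (EuclideanSpace ℝ (Fin d)), IsClosed F → F ⊆ U →
      Filter.Tendsto (fun r : ℝ => H (F \ Metric.ball 0 r)) Filter.atTop (nhds 0)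

/-- Semifiniteness: every open set of infinite capacity contains subsets of
arbitrarily large finite capacity. -/
def SemifiniteSF {α : Type*} [TopologicalSpace α] (H : Set α → ℝ≥0∞) : Prop :=
  ∀ U : Set α, IsOpen U → H U = ⊤ → ∀ M : ℝ, 0 ≤ M →
    ∃ E ⊆ U, ENNReal.ofReal M ≤ H E ∧ H E < ⊤

/-- The regularization `H̃(A) = sup { H(D) : D ⊆ A, H(D) < ∞ }`. -/
noncomputable def tildeSF {α : Type*} (H : Set α → ℝ≥0∞) (A : Set α) : ℝ≥0∞ :=
  ⨆ (D : Set α) (_ : D ⊆ A) (_ : H D < ⊤), H D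

/-! Off a set `E` of capacity at most `ε`, eventually `|f n - g| < δ`, so
`{g > t} ⊆ {f n > t - δ} ∪ E`. Integrating over `t ∈ (δ, T]` and shifting `t` by `δ` gives
`∫_δ^T H{g > t} dt ≤ ∫ f n dH + (T - δ) H(E)`; let `ε → 0`, then exhaust `(0, ∞)` by the
intervals `(δ, T]`. -/

lemma ENNReal.ofReal_sub_lt_of_dist_toReal_lt {a b : ℝ≥0∞} {t δ : ℝ} (hδt : δ ≤ t)
    (ha : a ≠ ⊤) (hb : b ≠ ⊤) (hab : dist a.toReal b.toReal < δ) (h : ENNReal.ofReal t < a) :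
    ENNReal.ofReal (t - δ) < b := by
  have hδ : 0 < δ := dist_nonneg.trans_lt hab
  rw [ENNReal.ofReal_lt_iff_lt_toReal (by linarith) ha] at h
  rw [ENNReal.ofReal_lt_iff_lt_toReal (by linarith) hb]
  rw [Real.dist_eq, abs_sub_lt_iff] at hab
  linarith

lemma setLIntegral_Ioi_comp_sub_right (ψ : ℝ → ℝ≥0∞) (δ : ℝ) :
    ∫⁻ t in Ioi δ, ψ (t - δ) = ∫⁻ s in Ioi 0, ψ s := by
  have hpre : Ioi δ = (fun t => t - δ) ⁻¹' Ioi 0 := by ext; simp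
  rw [hpre, (measurePreserving_sub_right volume δ).setLIntegral_comp_preimage_emb
    (measurableEmbedding_subRight δ)]

lemma setLIntegral_Ioi_le_of_forall_Ioc {φ : ℝ → ℝ≥0∞} {a : ℝ} {L : ℝ≥0∞}
    (h : ∀ δ T, a < δ → δ < T → ∫⁻ t in Ioc δ T, φ t ≤ L) : ∫⁻ t in Ioi a, φ t ≤ L := by
  have hlower : Ioi a = ⋃ n : ℕ, Ioi (a + 1 / (n + 1)) := by
    refine (iUnion_subset fun n =>
      Ioi_subset_Ioi (le_add_of_nonneg_right (by positivity))).antisymm' ?_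
    intro x hx
    obtain ⟨n, hn⟩ := exists_nat_one_div_lt (sub_pos.2 (mem_Ioi.1 hx))
    exact mem_iUnion.2 ⟨n, by simp only [mem_Ioi]; linarith⟩
  have hupper (b : ℝ) : Ioi b = ⋃ m : ℕ, Ioc b (b + (m + 1)) := by
    refine (iUnion_Ioc_eq_Ioi_self_iff.2 fun x _ => ?_).symm
    obtain ⟨m, hm⟩ := exists_nat_ge (x - b)
    exact ⟨m, by linarith⟩
  have hlower_mono : Monotone fun n : ℕ => Ioi (a + 1 / (n + 1)) :=
    fun n m hnm => Ioi_subset_Ioi (by gcongr)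
  have hupper_mono (b : ℝ) : Monotone fun m : ℕ => Ioc b (b + (m + 1)) :=
    fun n m hnm => Ioc_subset_Ioc_right (by gcongr)
  rw [hlower, setLIntegral_iUnion_of_directed _ hlower_mono.directed_le]
  refine iSup_le fun n => ?_
  rw [hupper, setLIntegral_iUnion_of_directed _ (hupper_mono _).directed_le]
  exact iSup_le fun m => h _ _ (lt_add_of_pos_right a (by positivity)) (by linarith)

section ChoquetFatou

variable {α : Type*} {H : Set α → ℝ≥0∞}

lemma superlevel_le_shifted_superlevel_add (hmono : MonotoneSF H) (hsub : FinitelySubadditive H)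
    {f g : α → ℝ≥0∞} {E : Set α} {δ t : ℝ} (hδt : δ ≤ t)
    (hclose : ∀ x ∉ E, g x ≠ ⊤ ∧ f x ≠ ⊤ ∧ dist (g x).toReal (f x).toReal < δ) :
    H {x | ENNReal.ofReal t < g x} ≤ H {x | ENNReal.ofReal (t - δ) < f x} + H E := by
  refine (hmono fun x hx => ?_).trans (hsub _ _)
  by_cases hxE : x ∈ E
  · exact Or.inr hxE
  · obtain ⟨hg, hf, hdist⟩ := hclose x hxE
    exact Or.inl (ENNReal.ofReal_sub_lt_of_dist_toReal_lt hδt hg hf hdist hx)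

lemma setLIntegral_Ioc_superlevel_le_choquet_add (hmono : MonotoneSF H)
    (hsub : FinitelySubadditive H) {f g : α → ℝ≥0∞} {E : Set α} {δ : ℝ} (T : ℝ)
    (hclose : ∀ x ∉ E, g x ≠ ⊤ ∧ f x ≠ ⊤ ∧ dist (g x).toReal (f x).toReal < δ) :
    ∫⁻ t in Ioc δ T, H {x | ENNReal.ofReal t < g x} ≤
      choquet H f + H E * ENNReal.ofReal (T - δ) :=
  calc ∫⁻ t in Ioc δ T, H {x | ENNReal.ofReal t < g x}
      ≤ ∫⁻ t in Ioc δ T, (H {x | ENNReal.ofReal (t - δ) < f x} + H E) :=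
        setLIntegral_mono' measurableSet_Ioc fun t ht =>
          superlevel_le_shifted_superlevel_add hmono hsub ht.1.le hclose
    _ = (∫⁻ t in Ioc δ T, H {x | ENNReal.ofReal (t - δ) < f x}) + H E * volume (Ioc δ T) := by
        rw [lintegral_add_right _ measurable_const, setLIntegral_const]
    _ ≤ (∫⁻ t in Ioi δ, H {x | ENNReal.ofReal (t - δ) < f x}) + H E * ENNReal.ofReal (T - δ) := by
        rw [Real.volume_Ioc]
        gcongr
        exact Ioc_subset_Ioi_self
    _ = choquet H f + H E * ENNReal.ofReal (T - δ) := by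
        rw [setLIntegral_Ioi_comp_sub_right (fun s => H {x | ENNReal.ofReal s < f x}) δ, choquet]

lemma setLIntegral_Ioc_superlevel_le_liminf_choquet (hmono : MonotoneSF H)
    (hsub : FinitelySubadditive H) {f : ℕ → α → ℝ≥0∞} {g : α → ℝ≥0∞}
    (hqu : QUTendstoENN H f g) {δ T : ℝ} (hδ : 0 < δ) (hδT : δ < T) :
    ∫⁻ t in Ioc δ T, H {x | ENNReal.ofReal t < g x} ≤
      liminf (fun n => choquet H (f n)) atTop := by
  refine ENNReal.le_of_forall_pos_le_add fun ε hε _ => ?_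
  have hTδ : 0 < T - δ := sub_pos.2 hδT
  obtain ⟨E, hE, hf, hg, hunif⟩ := hqu (ε / (T - δ)) (div_pos hε hTδ)
  have hEε : H E * ENNReal.ofReal (T - δ) ≤ ε :=
    calc H E * ENNReal.ofReal (T - δ)
        ≤ ENNReal.ofReal (ε / (T - δ)) * ENNReal.ofReal (T - δ) := by gcongr
      _ = ε := by
        rw [← ENNReal.ofReal_mul (by positivity), div_mul_cancel₀ _ hTδ.ne',
          ENNReal.ofReal_coe_nnreal]
  have hclose : ∀ᶠ n in atTop,
      ∀ x ∉ E, g x ≠ ⊤ ∧ f n x ≠ ⊤ ∧ dist (g x).toReal (f n x).toReal < δ := by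
    filter_upwards [Metric.tendstoUniformlyOn_iff.mp hunif δ hδ] with n hn x hx
    exact ⟨hg x hx, hf n x hx, hn x hx⟩
  calc ∫⁻ t in Ioc δ T, H {x | ENNReal.ofReal t < g x}
      ≤ liminf (fun n => choquet H (f n) + ε) atTop :=
        le_liminf_of_le (by isBoundedDefault) <| hclose.mono fun n hn =>
          (setLIntegral_Ioc_superlevel_le_choquet_add hmono hsub T hn).trans (by gcongr)
    _ = liminf (fun n => choquet H (f n)) atTop + ε :=
        liminf_add_const atTop _ _ (by isBoundedDefault) (by isBoundedDefault)

theorem choquet_le_liminf_of_quTendstoENN (hmono : MonotoneSF H)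
    (hsub : FinitelySubadditive H) {f : ℕ → α → ℝ≥0∞} {g : α → ℝ≥0∞}
    (hqu : QUTendstoENN H f g) :
    choquet H g ≤ liminf (fun n => choquet H (f n)) atTop :=
  setLIntegral_Ioi_le_of_forall_Ioc fun _ _ hδ hδT =>
    setLIntegral_Ioc_superlevel_le_liminf_choquet hmono hsub hqu hδ hδT

end ChoquetFatou

/-- Fatou's lemma for quasi-uniform convergence. -/
theorem choquet_fatou_of_quasiUniform {d : ℕ}
    (H : Set (EuclideanSpace ℝ (Fin d)) → ℝ≥0∞)
    (hmono : MonotoneSF H) (hsub : FinitelySubadditive H)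
    (f : ℕ → EuclideanSpace ℝ (Fin d) → ℝ≥0∞) (g : EuclideanSpace ℝ (Fin d) → ℝ≥0∞)
    (hqu : QUTendstoENN H f g) :
    choquet H g ≤ Filter.liminf (fun n => choquet H (f n)) Filter.atTop :=
  choquet_le_liminf_of_quTendstoENN hmono hsub hqu
end

section
/- Suppose H : 𝒫(ℝ^d) → [0,∞] is monotone and finitely subadditive. If (f_n) is a sequence of real-valued functions on ℝ^d converging quasi-uniformly to f, and there exists F : ℝ^d → [0,∞] with ∫F dH < ∞ and |f_n| ≤ F on ℝ^d for every n, then ∫|f| dH < ∞ and lim_{n→∞} ∫|f_n − f| dH = 0. -/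
open MeasureTheory Filter Set Topology
open scoped ENNReal

/-!
Off the exceptional sets of quasi-uniform convergence the domination passes to the limit,
`|g| ≤ F`, so `H {|g| > t} ≤ H {F > t} + ε` for every `ε > 0` and hence `∫ |g| dH ≤ ∫ F dH`.
For the convergence, subadditivity dominates `t ↦ H {|fₙ - g| > t}` by `2 H {F > t / 2}`,
whose integral is `4 ∫ F dH < ∞`, and uniform convergence off small sets makes it tend to `0`
for each `t > 0`; dominated convergence in `t` concludes.
-/
theorem setLIntegral_Ioi_zero_comp_div (φ : ℝ → ℝ≥0∞) {c : ℝ} (hc : 0 < c) :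
    ∫⁻ t in Ioi 0, φ (t / c) = ENNReal.ofReal c * ∫⁻ t in Ioi 0, φ t := by
  set e := MeasurableEquiv.mulLeft₀ c⁻¹ (inv_ne_zero hc.ne')
  have hpre : e ⁻¹' Ioi 0 = Ioi 0 := by
    simp [e, MeasurableEquiv.mulLeft₀, preimage_const_mul_Ioi₀ _ (inv_pos.2 hc)]
  have hmap : Measure.map e (volume.restrict (Ioi 0)) =
      (ENNReal.ofReal c • volume).restrict (Ioi 0) := by
    rw [← hpre, ← Measure.restrict_map e.measurable measurableSet_Ioi, hpre]
    simp [e, MeasurableEquiv.mulLeft₀, Real.map_volume_mul_left (inv_ne_zero hc.ne'),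
      abs_of_pos hc]
  calc ∫⁻ t in Ioi 0, φ (t / c) = ∫⁻ t in Ioi 0, φ (e t) := by
        simp [e, MeasurableEquiv.mulLeft₀, div_eq_inv_mul]
    _ = ENNReal.ofReal c * ∫⁻ t in Ioi 0, φ t := by
        rw [← lintegral_map_equiv, hmap, Measure.restrict_smul, lintegral_smul_measure, smul_eq_mul]

/-- The distribution function `t ↦ H {u > t}`, whose integral over `(0, ∞)` is `choquet H u`. -/
def distribution {α : Type*} (H : Set α → ℝ≥0∞) (u : α → ℝ≥0∞) (t : ℝ) : ℝ≥0∞ :=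
  H {x | ENNReal.ofReal t < u x}

def QuasiLE {α : Type*} (H : Set α → ℝ≥0∞) (u v : α → ℝ≥0∞) : Prop :=
  ∀ ε : ℝ, 0 < ε → ∃ E : Set α, H E ≤ ENNReal.ofReal ε ∧ ∀ x ∉ E, u x ≤ v x

section distribution

variable {α : Type*} {H : Set α → ℝ≥0∞}

theorem antitone_distribution (hmono : MonotoneSF H) (u : α → ℝ≥0∞) :
    Antitone (distribution H u) := fun _ _ hst =>
  hmono fun _ hx => (ENNReal.ofReal_le_ofReal hst).trans_lt hx

theorem distribution_mono (hmono : MonotoneSF H) {u v : α → ℝ≥0∞} (huv : u ≤ v) (t : ℝ) :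
    distribution H u t ≤ distribution H v t :=
  hmono fun x hx => lt_of_lt_of_le hx (huv x)

theorem distribution_le_add_of_le_off (hmono : MonotoneSF H) (hsub : FinitelySubadditive H)
    {u v : α → ℝ≥0∞} {E : Set α} (hle : ∀ x ∉ E, u x ≤ v x) (t : ℝ) :
    distribution H u t ≤ distribution H v t + H E := by
  refine (hmono fun x hx => ?_).trans (hsub _ _)
  by_cases hxE : x ∈ E
  · exact Or.inr hxE
  · exact Or.inl (lt_of_lt_of_le hx (hle x hxE))

theorem QuasiLE.distribution_le (hmono : MonotoneSF H) (hsub : FinitelySubadditive H)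
    {u v : α → ℝ≥0∞} (huv : QuasiLE H u v) (t : ℝ) :
    distribution H u t ≤ distribution H v t := by
  refine ENNReal.le_of_forall_pos_le_add fun ε hε _ => ?_
  obtain ⟨E, hE, hle⟩ := huv ε hε
  calc distribution H u t ≤ distribution H v t + H E :=
        distribution_le_add_of_le_off hmono hsub hle t
    _ ≤ distribution H v t + ε := add_le_add le_rfl (by simpa using hE)

theorem distribution_add_le (hmono : MonotoneSF H) (hsub : FinitelySubadditive H)
    (u v : α → ℝ≥0∞) (t : ℝ) :
    distribution H (u + v) t ≤ distribution H u (t / 2) + distribution H v (t / 2) := by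
  have hhalf : ENNReal.ofReal (t / 2) + ENNReal.ofReal (t / 2) ≤ ENNReal.ofReal t := by
    rcases le_or_gt 0 t with ht | ht
    · rw [← ENNReal.ofReal_add (by positivity) (by positivity), add_halves]
    · simp [ENNReal.ofReal_of_nonpos (by linarith : t / 2 ≤ 0)]
  refine (hmono fun x hx => ?_).trans (hsub _ _)
  by_contra! hxy
  simp only [mem_union, mem_ofPred_eq, not_or, not_lt] at hxy
  exact (lt_of_lt_of_le hx ((add_le_add hxy.1 hxy.2).trans hhalf)).false

theorem QUTendsto.quasiLE_of_forall_le {f : ℕ → α → ℝ} {g : α → ℝ}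
    (hqu : QUTendsto H f g) {F : α → ℝ≥0∞}
    (hdom : ∀ n x, ENNReal.ofReal |f n x| ≤ F x) :
    QuasiLE H (fun x => ENNReal.ofReal |g x|) F := by
  intro ε hε
  obtain ⟨E, hE, hunif⟩ := hqu ε hε
  refine ⟨E, hE, fun x hx => ?_⟩
  have hlim : Tendsto (fun n => ENNReal.ofReal |f n x|) atTop (𝓝 (ENNReal.ofReal |g x|)) :=
    (ENNReal.continuous_ofReal.comp continuous_abs).continuousAt.tendsto.comp
      (hunif.tendsto_at (mem_compl hx))
  exact le_of_tendsto' hlim fun n => hdom n x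

theorem QUTendsto.tendsto_distribution_abs_sub (hmono : MonotoneSF H) {f : ℕ → α → ℝ}
    {g : α → ℝ} (hqu : QUTendsto H f g) {t : ℝ} (ht : 0 < t) :
    Tendsto (fun n => distribution H (fun x => ENNReal.ofReal |f n x - g x|) t) atTop (𝓝 0) := by
  refine ENNReal.tendsto_nhds_zero.2 fun ε hε => ?_
  obtain ⟨r, hr, hrε⟩ : ∃ r : ℝ, 0 < r ∧ ENNReal.ofReal r ≤ ε := by
    rcases eq_or_ne ε ⊤ with rfl | hε_top
    · exact ⟨1, one_pos, le_top⟩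
    · exact ⟨ε.toReal, ENNReal.toReal_pos hε.ne' hε_top, ENNReal.ofReal_toReal_le⟩
  obtain ⟨E, hE, hunif⟩ := hqu r hr
  filter_upwards [Metric.tendstoUniformlyOn_iff.1 hunif t ht] with n hn
  refine (hmono fun x hx => ?_).trans (hE.trans hrε)
  by_contra hxE
  have hclose : |f n x - g x| < t := by simpa [Real.dist_eq, abs_sub_comm] using hn x hxE
  exact not_lt.2 (ENNReal.ofReal_le_ofReal hclose.le) hx

theorem tendsto_choquet_zero_of_distribution_le (hmono : MonotoneSF H) {u : ℕ → α → ℝ≥0∞}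
    {v : ℝ → ℝ≥0∞} (hv : ∫⁻ t in Ioi 0, v t ≠ ⊤) (hle : ∀ n t, distribution H (u n) t ≤ v t)
    (hlim : ∀ t, 0 < t → Tendsto (fun n => distribution H (u n) t) atTop (𝓝 0)) :
    Tendsto (fun n => choquet H (u n)) atTop (𝓝 0) := by
  have h := tendsto_lintegral_of_dominated_convergence v
    (fun n => (antitone_distribution hmono (u n)).measurable)
    (fun n => ae_of_all _ (hle n)) hv
    ((ae_restrict_mem measurableSet_Ioi).mono fun t ht => hlim t ht)
  rwa [lintegral_zero] at h

end distribution

/-- Dominated convergence theorem for quasi-uniform convergence. -/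
theorem choquet_dominatedConvergence_of_quasiUniform {d : ℕ}
    (H : Set (EuclideanSpace ℝ (Fin d)) → ℝ≥0∞)
    (hmono : MonotoneSF H) (hsub : FinitelySubadditive H)
    (f : ℕ → EuclideanSpace ℝ (Fin d) → ℝ) (g : EuclideanSpace ℝ (Fin d) → ℝ)
    (hqu : QUTendsto H f g)
    (F : EuclideanSpace ℝ (Fin d) → ℝ≥0∞) (hF : choquet H F < ⊤)
    (hdom : ∀ n x, ENNReal.ofReal |f n x| ≤ F x) :
    choquet H (fun x => ENNReal.ofReal |g x|) < ⊤ ∧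
      Filter.Tendsto (fun n => choquet H (fun x => ENNReal.ofReal |f n x - g x|))
        Filter.atTop (nhds 0) := by
  have hg := (hqu.quasiLE_of_forall_le hdom).distribution_le hmono hsub
  refine ⟨(lintegral_mono hg).trans_lt hF, ?_⟩
  have habs_sub_le :
      ∀ n, (fun x => ENNReal.ofReal |f n x - g x|) ≤ F + fun x => ENNReal.ofReal |g x| :=
    fun n x => calc
      ENNReal.ofReal |f n x - g x| ≤ ENNReal.ofReal (|f n x| + |g x|) :=
        ENNReal.ofReal_le_ofReal (abs_sub _ _)
      _ ≤ ENNReal.ofReal |f n x| + ENNReal.ofReal |g x| := ENNReal.ofReal_add_le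
      _ ≤ F x + ENNReal.ofReal |g x| := add_le_add (hdom n x) le_rfl
  refine tendsto_choquet_zero_of_distribution_le hmono (v := fun t => 2 * distribution H F (t / 2))
    ?_ (fun n t => ?_) fun t ht => hqu.tendsto_distribution_abs_sub hmono ht
  · rw [lintegral_const_mul' _ _ ENNReal.ofNat_ne_top, setLIntegral_Ioi_zero_comp_div _ two_pos]
    exact ENNReal.mul_ne_top ENNReal.ofNat_ne_top (ENNReal.mul_ne_top ENNReal.ofReal_ne_top hF.ne)
  · calc _ ≤ distribution H F (t / 2) + distribution H (fun x => ENNReal.ofReal |g x|) (t / 2) :=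
          (distribution_mono hmono (habs_sub_le n) t).trans (distribution_add_le hmono hsub _ _ t)
      _ ≤ 2 * distribution H F (t / 2) := by rw [two_mul]; exact add_le_add le_rfl (hg _)
end

section
/- Suppose H : 𝒫(ℝ^d) → [0,∞] is monotone and finitely subadditive. If f : ℝ^d → [-∞,∞] is quasicontinuous and ∫|f| dH < ∞, then there exists a sequence (f_n) of bounded continuous real-valued functions on ℝ^d such that lim_{n→∞} ∫|f_n − f| dH = 0. -/
open MeasureTheory Filter Set Topology
open scoped ENNReal

/-!
Choose open sets `ω n` with `H (ω n) ≤ (n+1)⁻²` off which `f` is finite and continuous, and let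
`g n` be a Tietze extension, with values in `[-N, N]` for `N = n + 1`, of the truncation of `f` at
level `N` from the closed set `(ω n)ᶜ`. Off `ω n` we have `|g n - f| = (|f| - N)⁺`, and on `ω n`
only `|g n - f| ≤ N + |f|`. Since `H` is monotone and subadditive, this gives
`∫ |g n - f| dH ≤ 2N H(ω n) + 2 ∫_N^∞ H{|f| > t} dt`; the first term is `O(1/N)` and the second
is the tail of the convergent integral `∫ |f| dH`.
-/

lemma setLIntegral_Ioi_comp_add_right (φ : ℝ → ℝ≥0∞) (a c : ℝ) :
    ∫⁻ t in Ioi a, φ (t + c) = ∫⁻ t in Ioi (a + c), φ t := by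
  have hpre : (· + c) ⁻¹' Ioi (a + c) = Ioi a := by ext t; simp
  rw [← hpre]
  exact (measurePreserving_add_right volume c).setLIntegral_comp_preimage_emb
    (MeasurableEquiv.addRight c).measurableEmbedding φ _

lemma tendsto_setLIntegral_Ioi_atTop {φ : ℝ → ℝ≥0∞} {a : ℝ} (h : ∫⁻ t in Ioi a, φ t ≠ ∞) :
    Tendsto (fun c => ∫⁻ t in Ioi c, φ t) atTop (𝓝 0) := by
  have hlim := tendsto_measure_iInter_atTop (μ := volume.withDensity φ) (s := Ioi)
    (fun _ => measurableSet_Ioi.nullMeasurableSet) (fun _ _ hcd => Ioi_subset_Ioi hcd)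
    ⟨a, by rwa [withDensity_apply _ measurableSet_Ioi]⟩
  have hempty : ⋂ c : ℝ, Ioi c = ∅ :=
    eq_empty_of_forall_notMem fun t ht => lt_irrefl t (mem_iInter.1 ht t)
  rw [hempty, measure_empty] at hlim
  simpa [Function.comp_def, withDensity_apply _ measurableSet_Ioi] using hlim

noncomputable def choquetTail {α : Type*} (H : Set α → ℝ≥0∞) (u : α → ℝ≥0∞) (c : ℝ) : ℝ≥0∞ :=
  ∫⁻ t in Ioi c, H {x | ENNReal.ofReal t < u x}

section Choquet

variable {α : Type*} {H : Set α → ℝ≥0∞}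

lemma tendsto_choquetTail_atTop {u : α → ℝ≥0∞} (hu : choquet H u ≠ ∞) :
    Tendsto (choquetTail H u) atTop (𝓝 0) :=
  tendsto_setLIntegral_Ioi_atTop hu

lemma MonotoneSF.antitone_superlevel (hmono : MonotoneSF H) (u : α → ℝ≥0∞) :
    Antitone fun t : ℝ => H {x | ENNReal.ofReal t < u x} :=
  fun _ _ hst => hmono fun _ hx => (ENNReal.ofReal_le_ofReal hst).trans_lt hx

lemma choquet_mono (hmono : MonotoneSF H) {u v : α → ℝ≥0∞} (huv : u ≤ v) :
    choquet H u ≤ choquet H v :=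
  lintegral_mono fun _ => hmono fun x hx => hx.trans_le (huv x)

lemma choquet_sup_le (hmono : MonotoneSF H) (hsub : FinitelySubadditive H) (u v : α → ℝ≥0∞) :
    choquet H (u ⊔ v) ≤ choquet H u + choquet H v := by
  rw [choquet, choquet, choquet,
    ← lintegral_add_left (hmono.antitone_superlevel u).measurable]
  refine lintegral_mono fun t => ?_
  refine (hmono fun x hx => ?_).trans (hsub _ _)
  exact lt_sup_iff.1 (mem_ofPred.1 hx)

lemma choquet_tsub_const (u : α → ℝ≥0∞) {c : ℝ} (hc : 0 ≤ c) :
    choquet H (fun x => u x - ENNReal.ofReal c) = choquetTail H u c := by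
  rw [choquet, choquetTail, ← zero_add c, ← setLIntegral_Ioi_comp_add_right]
  refine setLIntegral_congr_fun measurableSet_Ioi fun t ht => ?_
  simp only [lt_tsub_iff_right, ← ENNReal.ofReal_add (le_of_lt ht) hc, zero_add]

lemma choquet_indicator_const_add_le (hmono : MonotoneSF H) (ω : Set α) (u : α → ℝ≥0∞)
    {c : ℝ} (hc : 0 ≤ c) :
    choquet H (ω.indicator fun x => ENNReal.ofReal c + u x)
      ≤ ENNReal.ofReal (2 * c) * H ω + choquetTail H u c := by
  set v := ω.indicator fun x => ENNReal.ofReal c + u x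
  have hω : ∀ t : ℝ, H {x | ENNReal.ofReal t < v x} ≤ H ω := fun t =>
    hmono fun x hx => by
      by_contra hxω
      simp [v, indicator_of_notMem hxω] at hx
  have htail : ∀ t ∈ Ioi (2 * c),
      H {x | ENNReal.ofReal t < v x} ≤ H {x | ENNReal.ofReal (t + -c) < u x} :=
    fun t ht => hmono fun x hx => by
      by_cases hxω : x ∈ ω
      · have hct : ENNReal.ofReal c ≤ ENNReal.ofReal t :=
          ENNReal.ofReal_le_ofReal (by linarith [mem_Ioi.1 ht])
        rw [mem_ofPred, ← sub_eq_add_neg, ENNReal.ofReal_sub _ hc]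
        refine ENNReal.sub_lt_of_lt_add hct ?_
        simpa [v, indicator_of_mem hxω, add_comm] using hx
      · simp [v, indicator_of_notMem hxω] at hx
  calc choquet H v
      ≤ (∫⁻ t in Ioc 0 (2 * c), H {x | ENNReal.ofReal t < v x})
        + ∫⁻ t in Ioi (2 * c), H {x | ENNReal.ofReal t < v x} := by
        rw [choquet, ← Ioc_union_Ioi_eq_Ioi (show (0 : ℝ) ≤ 2 * c by linarith)]
        exact lintegral_union_le _ _ _
    _ ≤ (∫⁻ _ in Ioc 0 (2 * c), H ω)
        + ∫⁻ t in Ioi (2 * c), H {x | ENNReal.ofReal (t + -c) < u x} :=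
        add_le_add (lintegral_mono hω) (setLIntegral_mono' measurableSet_Ioi htail)
    _ = ENNReal.ofReal (2 * c) * H ω + choquetTail H u c := by
        rw [setLIntegral_const, Real.volume_Ioc, sub_zero, mul_comm,
          setLIntegral_Ioi_comp_add_right (fun t => H {x | ENNReal.ofReal t < u x}),
          choquetTail]
        ring_nf

end Choquet

lemma abs_max_neg_min_sub_self {c : ℝ} (hc : 0 ≤ c) (r : ℝ) :
    |max (-c) (min c r) - r| = max (|r| - c) 0 := by
  rcases le_total r (-c) with h | h
  · rw [max_eq_left (min_le_of_right_le h), abs_of_nonneg (by linarith),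
      abs_of_nonpos (by linarith), max_eq_left (by linarith)]
    ring
  rcases le_total r c with h' | h'
  · rw [min_eq_right h', max_eq_right h, sub_self, abs_zero, max_eq_right]
    exact sub_nonpos.2 (abs_le.2 ⟨h, h'⟩)
  · rw [min_eq_left h', max_eq_right (by linarith), abs_of_nonpos (by linarith),
      abs_of_nonneg (by linarith), max_eq_left (by linarith)]
    ring

lemma EReal.abs_coe_sub_le (a : ℝ) (y : EReal) :
    ((a : EReal) - y).abs ≤ ENNReal.ofReal |a| + y.abs := by
  induction y using EReal.rec with
  | bot => simp
  | coe b =>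
      rw [← EReal.coe_sub, EReal.abs_def, EReal.abs_def,
        ← ENNReal.ofReal_add (abs_nonneg _) (abs_nonneg _)]
      exact ENNReal.ofReal_le_ofReal (abs_sub a b)
  | top => simp [EReal.sub_top]

lemma exists_continuous_abs_le_eqOn_truncation {X : Type*} [TopologicalSpace X] [NormalSpace X]
    {s : Set X} (hs : IsClosed s) {φ : X → ℝ} (hφ : ContinuousOn φ s) {c : ℝ} (hc : 0 ≤ c) :
    ∃ g : X → ℝ, Continuous g ∧ (∀ x, |g x| ≤ c) ∧ EqOn g (fun x => max (-c) (min c (φ x))) s := by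
  have htrunc : ContinuousOn (fun x => max (-c) (min c (φ x))) s :=
    (continuous_const.max (continuous_const.min continuous_id)).comp_continuousOn hφ
  obtain ⟨g, hg_mem, hg_eq⟩ := ContinuousMap.exists_restrict_eq_forall_mem_of_closed
    ⟨_, htrunc.domRestrict⟩ (t := Icc (-c) c)
    (fun x => ⟨le_max_left _ _, max_le (by linarith) (min_le_left _ _)⟩)
    (nonempty_Icc.2 (by linarith)) hs
  exact ⟨g, g.continuous, fun x => abs_le.2 (hg_mem x), fun x hx => congr($hg_eq ⟨x, hx⟩)⟩

lemma abs_coe_sub_le_indicator_sup_tsub {X : Type*} {f : X → EReal} {g : X → ℝ} {ω : Set X}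
    {c : ℝ} (hc : 0 ≤ c) (hfin : ∀ x ∉ ω, f x ≠ ⊤ ∧ f x ≠ ⊥) (hg : ∀ x, |g x| ≤ c)
    (hg_eq : ∀ x ∉ ω, g x = max (-c) (min c (f x).toReal)) :
    (fun x => ((g x : EReal) - f x).abs)
      ≤ ω.indicator (fun x => ENNReal.ofReal c + (f x).abs)
        ⊔ fun x => (f x).abs - ENNReal.ofReal c := by
  intro x
  by_cases hxω : x ∈ ω
  · refine le_sup_of_le_left ?_
    rw [indicator_of_mem hxω]
    exact (EReal.abs_coe_sub_le _ _).trans (add_le_add_left (ENNReal.ofReal_le_ofReal (hg x)) _)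
  · refine le_sup_of_le_right (le_of_eq ?_)
    obtain ⟨r, hr⟩ : ∃ r : ℝ, f x = r := ⟨_, (EReal.coe_toReal (hfin x hxω).1 (hfin x hxω).2).symm⟩
    dsimp only
    rw [hg_eq x hxω, hr, EReal.toReal_coe, ← EReal.coe_sub, EReal.abs_def, EReal.abs_def,
      abs_max_neg_min_sub_self hc, ← ENNReal.ofReal_sub _ hc]
    exact ENNReal.ofReal_max _ _ |>.trans (by simp)

theorem exists_continuous_abs_le_choquet_abs_sub_le {X : Type*} [TopologicalSpace X]
    [NormalSpace X] {H : Set X → ℝ≥0∞} (hmono : MonotoneSF H) (hsub : FinitelySubadditive H)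
    {f : X → EReal} {ω : Set X} (hω : IsOpen ω) (hfin : ∀ x ∉ ω, f x ≠ ⊤ ∧ f x ≠ ⊥)
    (hcont : ContinuousOn f ωᶜ) {c : ℝ} (hc : 0 ≤ c) :
    ∃ g : X → ℝ, Continuous g ∧ (∀ x, |g x| ≤ c) ∧
      choquet H (fun x => ((g x : EReal) - f x).abs)
        ≤ ENNReal.ofReal (2 * c) * H ω + 2 * choquetTail H (fun x => (f x).abs) c := by
  have hreal : ContinuousOn (fun x => (f x).toReal) ωᶜ :=
    EReal.continuousOn_toReal.comp hcont fun x hx => by simpa [not_or] using (hfin x hx).symm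
  obtain ⟨g, hg_cont, hg_le, hg_eq⟩ :=
    exists_continuous_abs_le_eqOn_truncation hω.isClosed_compl hreal hc
  refine ⟨g, hg_cont, hg_le, ?_⟩
  calc choquet H (fun x => ((g x : EReal) - f x).abs)
      ≤ choquet H (ω.indicator (fun x => ENNReal.ofReal c + (f x).abs))
        + choquet H (fun x => (f x).abs - ENNReal.ofReal c) :=
        (choquet_mono hmono (abs_coe_sub_le_indicator_sup_tsub hc hfin hg_le hg_eq)).trans
          (choquet_sup_le hmono hsub _ _)
    _ ≤ ENNReal.ofReal (2 * c) * H ω + choquetTail H (fun x => (f x).abs) c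
        + choquetTail H (fun x => (f x).abs) c := by
        rw [choquet_tsub_const _ hc]
        exact add_le_add_left (choquet_indicator_const_add_le hmono ω _ hc) _
    _ = ENNReal.ofReal (2 * c) * H ω + 2 * choquetTail H (fun x => (f x).abs) c := by
        ring

/-- Approximation of quasicontinuous functions with finite Choquet integral
by bounded continuous functions. -/
theorem quasicontinuous_approx_boundedContinuous {d : ℕ}
    (H : Set (EuclideanSpace ℝ (Fin d)) → ℝ≥0∞)
    (hmono : MonotoneSF H) (hsub : FinitelySubadditive H)
    (f : EuclideanSpace ℝ (Fin d) → EReal) (hf : QuasicontinuousE H f)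
    (hint : choquet H (fun x => (f x).abs) < ⊤) :
    ∃ g : ℕ → EuclideanSpace ℝ (Fin d) → ℝ,
      (∀ n, Continuous (g n) ∧ ∃ M : ℝ, ∀ x, |g n x| ≤ M) ∧
      Filter.Tendsto (fun n => choquet H (fun x => ((g n x : EReal) - f x).abs))
        Filter.atTop (nhds 0) := by
  choose ω hω_open hω_le hω_fin hω_cont using
    fun n : ℕ => hf (1 / ((n : ℝ) + 1) ^ 2) (by positivity)
  choose g hg_cont hg_le hg_choquet using fun n : ℕ =>
    exists_continuous_abs_le_choquet_abs_sub_le hmono hsub (hω_open n) (hω_fin n) (hω_cont n)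
      (n.cast_add_one_pos (α := ℝ)).le
  refine ⟨g, fun n => ⟨hg_cont n, _, hg_le n⟩, ?_⟩
  have hcap (n : ℕ) : ENNReal.ofReal (2 * (n + 1)) * H (ω n) ≤ ENNReal.ofReal (2 / (n + 1)) :=
    calc ENNReal.ofReal (2 * (n + 1)) * H (ω n)
        ≤ ENNReal.ofReal (2 * (n + 1)) * ENNReal.ofReal (1 / ((n : ℝ) + 1) ^ 2) := by
          gcongr; exact hω_le n
      _ = ENNReal.ofReal (2 / (n + 1)) := by
          rw [← ENNReal.ofReal_mul (by positivity)]
          congr 1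
          field_simp
  have hcap_lim : Tendsto (fun n : ℕ => ENNReal.ofReal (2 / (n + 1))) atTop (𝓝 0) := by
    rw [← ENNReal.ofReal_zero]
    refine ENNReal.tendsto_ofReal ?_
    simpa [div_eq_mul_inv] using tendsto_one_div_add_atTop_nhds_zero_nat.const_mul (2 : ℝ)
  have htail_lim :
      Tendsto (fun n : ℕ => choquetTail H (fun x => (f x).abs) (n + 1)) atTop (𝓝 0) :=
    (tendsto_choquetTail_atTop hint.ne).comp
      (tendsto_atTop_add_const_right _ 1 tendsto_natCast_atTop_atTop)
  have hbound := hcap_lim.add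
    (ENNReal.Tendsto.const_mul htail_lim (a := 2) (Or.inr ENNReal.ofNat_ne_top))
  rw [zero_add, mul_zero] at hbound
  exact tendsto_of_tendsto_of_tendsto_of_le_of_le tendsto_const_nhds hbound (fun _ => zero_le)
    fun n => (hg_choquet n).trans (add_le_add_left (hcap n) _)
end

section
/- Suppose H : 𝒫(ℝ^d) → [0,∞] is strongly subadditive. Then for every n ≥ 1 and all sets C_1, …, C_n ⊆ ℝ^d, there exist sets D_1, …, D_{n−1} ⊆ D_n ⊆ ℝ^d such that ∑_{i=1}^n χ_{D_i} = ∑_{i=1}^n χ_{C_i} pointwise and ∑_{i=1}^n H(D_i) ≤ ∑_{i=1}^n H(C_i). -/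
open MeasureTheory Filter Set Topology
open scoped ENNReal

/-!
Replacing two of the sets, `A` and `B`, by `A ∩ B` and `A ∪ B` does not change the sum of the
characteristic functions (`χ_{A∩B} + χ_{A∪B} = χ_A + χ_B`) and, by strong subadditivity, does not
increase the total capacity. By induction, nest `C_2, …, C_n` inside a last set `L`; exchanging
`C_1` and `L` then puts `C_1 ∩ L` and every other set inside `C_1 ∪ L`.
-/

open Finset Function

lemma Finset.sum_univ_eq_sum_sdiff_pair_add {ι M : Type*} [Fintype ι] [DecidableEq ι]
    [AddCommMonoid M] (f : ι → M) {i j : ι} (hij : i ≠ j) :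
    ∑ k, f k = ∑ k ∈ univ \ {i, j}, f k + (f i + f j) := by
  rw [← sum_pair hij, sum_sdiff (subset_univ _)]

namespace Set

variable {α ι : Type*} [DecidableEq ι]

def exchange (D : ι → Set α) (i j : ι) : ι → Set α :=
  update (update D i (D i ∩ D j)) j (D i ∪ D j)

variable {D : ι → Set α} {i j : ι}

lemma exchange_apply_right : exchange D i j j = D i ∪ D j :=
  update_self ..

lemma exchange_apply_left (hij : i ≠ j) : exchange D i j i = D i ∩ D j := by
  rw [exchange, update_of_ne hij, update_self]

lemma exchange_apply_of_ne {k : ι} (hki : k ≠ i) (hkj : k ≠ j) : exchange D i j k = D k := by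
  rw [exchange, update_of_ne hkj, update_of_ne hki]

lemma exchange_subset_exchange_right (hD : ∀ k ≠ i, D k ⊆ D j) (k : ι) :
    exchange D i j k ⊆ exchange D i j j := by
  rw [exchange_apply_right]
  by_cases hkj : k = j
  · rw [hkj, exchange_apply_right]
  by_cases hki : k = i
  · rw [hki, exchange_apply_left (hki ▸ hkj)]
    exact inter_subset_left.trans subset_union_left
  · rw [exchange_apply_of_ne hki hkj]
    exact (hD k hki).trans subset_union_right

variable [Fintype ι] {M : Type*} [AddCommMonoid M]

lemma sum_comp_exchange (g : Set α → M) (hij : i ≠ j) :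
    ∑ k, g (exchange D i j k) =
      ∑ k ∈ Finset.univ \ {i, j}, g (D k) + (g (D i ∩ D j) + g (D i ∪ D j)) := by
  rw [sum_univ_eq_sum_sdiff_pair_add _ hij, exchange_apply_left hij, exchange_apply_right]
  congr 1
  refine sum_congr rfl fun k hk => ?_
  simp only [Finset.mem_sdiff, Finset.mem_univ, Finset.mem_insert, Finset.mem_singleton,
    true_and, not_or] at hk
  rw [exchange_apply_of_ne hk.1 hk.2]

lemma sum_indicator_exchange (f : α → M) (hij : i ≠ j) (x : α) :
    ∑ k, (exchange D i j k).indicator f x = ∑ k, (D k).indicator f x := by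
  rw [sum_comp_exchange (fun s => s.indicator f x) hij, sum_univ_eq_sum_sdiff_pair_add _ hij,
    add_comm ((D i ∩ D j).indicator f x), indicator_union_add_inter_apply]

end Set

open Set

namespace StronglySubadditive

variable {α ι : Type*} [Fintype ι] [DecidableEq ι] {H : Set α → ℝ≥0∞}

lemma sum_exchange_le (hH : StronglySubadditive H) (D : ι → Set α) {i j : ι} (hij : i ≠ j) :
    ∑ k, H (exchange D i j k) ≤ ∑ k, H (D k) := by
  rw [sum_comp_exchange H hij, sum_univ_eq_sum_sdiff_pair_add _ hij]
  exact add_le_add le_rfl (hH _ _)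

theorem exists_nested_rearrangement (hH : StronglySubadditive H) (n : ℕ)
    (C : Fin (n + 1) → Set α) :
    ∃ D : Fin (n + 1) → Set α,
      (∀ i, D i ⊆ D (Fin.last n)) ∧
      (∀ x, (∑ i, (D i).indicator (fun _ => (1 : ℕ)) x) =
        ∑ i, (C i).indicator (fun _ => (1 : ℕ)) x) ∧
      ∑ i, H (D i) ≤ ∑ i, H (C i) := by
  induction n with
  | zero =>
    exact ⟨C, fun i => by rw [Subsingleton.elim (α := Fin 1) i (Fin.last 0)], fun _ => rfl, le_rfl⟩
  | succ n ih =>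
    obtain ⟨D, hD_sub, hD_ind, hD_H⟩ := ih (Fin.tail C)
    let E : Fin (n + 2) → Set α := Fin.cons (C 0) D
    have h0last : (0 : Fin (n + 2)) ≠ Fin.last (n + 1) := Fin.last_pos.ne
    have hE_sub : ∀ k ≠ 0, E k ⊆ E (Fin.last (n + 1)) := Fin.cases (fun h => absurd rfl h)
      fun k _ => by simpa only [E, ← Fin.succ_last, Fin.cons_succ] using hD_sub k
    refine ⟨exchange E 0 (Fin.last (n + 1)), exchange_subset_exchange_right hE_sub,
      fun x => ?_, ?_⟩
    · rw [sum_indicator_exchange _ h0last, Fin.sum_univ_succ,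
        Fin.sum_univ_succ (f := fun k => (C k).indicator _ x)]
      exact congrArg _ (hD_ind x)
    · calc ∑ k, H (exchange E 0 (Fin.last (n + 1)) k)
          ≤ ∑ k, H (E k) := hH.sum_exchange_le E h0last
        _ = H (C 0) + ∑ k, H (D k) := Fin.sum_univ_succ _
        _ ≤ H (C 0) + ∑ k, H (Fin.tail C k) := add_le_add le_rfl hD_H
        _ = ∑ k, H (C k) := (Fin.sum_univ_succ (fun k => H (C k))).symm

end StronglySubadditive

/-- Minimization lemma for strongly subadditive set functions: the sets
`C_1, …, C_n` may be replaced by sets `D_1, …, D_{n-1} ⊆ D_n` with the same sum of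
characteristic functions and no larger total capacity. -/
theorem stronglySubadditive_rearrangement {d : ℕ}
    (H : Set (EuclideanSpace ℝ (Fin d)) → ℝ≥0∞) (hssa : StronglySubadditive H) :
    ∀ (n : ℕ) (C : Fin (n + 1) → Set (EuclideanSpace ℝ (Fin d))),
      ∃ D : Fin (n + 1) → Set (EuclideanSpace ℝ (Fin d)),
        (∀ i, D i ⊆ D (Fin.last n)) ∧
        (∀ x, (∑ i, (D i).indicator (fun _ => (1 : ℕ)) x) =
          ∑ i, (C i).indicator (fun _ => (1 : ℕ)) x) ∧
        ∑ i, H (D i) ≤ ∑ i, H (C i) :=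
  hssa.exists_nested_rearrangement
end

section
/- Suppose H : 𝒫(ℝ^d) → [0,∞] is strongly subadditive. Let C_1, …, C_n ⊆ ℝ^d, and let A_1 ⊆ A_2 ⊆ … ⊆ A_n ⊆ ℝ^d be the nested family of sets satisfying ∑_{i=1}^n χ_{A_i} = ∑_{i=1}^n χ_{C_i} pointwise (so that A_i is the set of points belonging to at least n − i + 1 of the sets C_1, …, C_n). Then ∑_{i=1}^n H(A_i) ≤ ∑_{i=1}^n H(C_i). -/
open MeasureTheory Filter Set Topology
open scoped ENNReal

/-! Let `N(x)` be the number of sets `C_i` containing `x`. The nested rearrangement consists of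
the superlevel sets `{N ≥ k}`, `k = 1, …, n`. Adding one set `c` to a family `T` changes them to
`{N_T ≥ k+1} ∪ ({N_T ≥ k} ∩ c)`, and strong subadditivity applied to these two sets, for each
`k`, moves the contribution of `c` up one level at a time; summing the resulting chain of
inequalities gives the induction step. Written as `∑ aₖ + xₘ ≤ ∑ bₖ + x₀`, the telescoping needs
no cancellation, which matters because `H` may take the value `∞`. -/

theorem Finset.sum_range_add_le_sum_range_add {M : Type*} [AddCommMonoid M] [PartialOrder M]
    [IsOrderedAddMonoid M] {a b x : ℕ → M} {m : ℕ}
    (h : ∀ k < m, a k + x (k + 1) ≤ b k + x k) :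
    ∑ k ∈ Finset.range m, a k + x m ≤ ∑ k ∈ Finset.range m, b k + x 0 := by
  induction m with
  | zero => simp
  | succ m ih =>
    calc ∑ k ∈ Finset.range (m + 1), a k + x (m + 1)
        = ∑ k ∈ Finset.range m, a k + (a m + x (m + 1)) := by
          rw [Finset.sum_range_succ, add_assoc]
      _ ≤ ∑ k ∈ Finset.range m, a k + (b m + x m) := add_le_add le_rfl (h m m.lt_succ_self)
      _ = (∑ k ∈ Finset.range m, a k + x m) + b m := by abel
      _ ≤ (∑ k ∈ Finset.range m, b k + x 0) + b m :=
          add_le_add (ih fun k hk => h k (hk.trans m.lt_succ_self)) le_rfl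
      _ = ∑ k ∈ Finset.range (m + 1), b k + x 0 := by rw [Finset.sum_range_succ]; abel

section CoverCount

variable {α ι : Type*} [Fintype ι]

noncomputable def coverCount (C : ι → Set α) (x : α) : ℕ :=
  ∑ i, (C i).indicator (fun _ => 1) x

def coverSuperlevel (C : ι → Set α) (k : ℕ) : Set α :=
  {x | k ≤ coverCount C x}

theorem coverCount_eq_card (C : ι → Set α) (x : α) [DecidablePred (x ∈ C ·)] :
    coverCount C x = (Finset.univ.filter (x ∈ C ·)).card := by
  simp only [coverCount, indicator_apply, Finset.card_filter]

theorem coverCount_le_card (C : ι → Set α) (x : α) : coverCount C x ≤ Fintype.card ι := by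
  classical
  rw [coverCount_eq_card]
  exact Finset.card_filter_le _ _

theorem coverSuperlevel_zero (C : ι → Set α) : coverSuperlevel C 0 = univ :=
  eq_univ_of_forall fun _ => Nat.zero_le _

theorem coverSuperlevel_antitone (C : ι → Set α) : Antitone (coverSuperlevel C) :=
  fun _ _ hkl _ hx => hkl.trans hx

theorem coverSuperlevel_eq_empty {C : ι → Set α} {k : ℕ} (hk : Fintype.card ι < k) :
    coverSuperlevel C k = ∅ :=
  eq_empty_of_forall_notMem fun x hx => (hk.trans_le hx).not_ge (coverCount_le_card C x)

end CoverCount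

section Fin

variable {α : Type*}

theorem coverSuperlevel_succ_castSucc {m : ℕ} (C : Fin (m + 1) → Set α) (k : ℕ) :
    coverSuperlevel C (k + 1) = coverSuperlevel (fun i : Fin m => C i.castSucc) (k + 1) ∪
      (coverSuperlevel (fun i : Fin m => C i.castSucc) k ∩ C (Fin.last m)) := by
  ext x
  simp only [coverSuperlevel, coverCount, Fin.sum_univ_castSucc, mem_ofPred_eq, mem_union,
    mem_inter_iff]
  by_cases hx : x ∈ C (Fin.last m)
  · simpa [hx] using Nat.le_of_lt
  · simp [hx]

theorem StronglySubadditive.sum_range_coverSuperlevel_le {H : Set α → ℝ≥0∞}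
    (hH : StronglySubadditive H) :
    ∀ {m : ℕ} (C : Fin m → Set α),
      ∑ k ∈ Finset.range m, H (coverSuperlevel C (k + 1)) ≤ ∑ i, H (C i)
  | 0, _ => by simp
  | m + 1, C => by
    set T : Fin m → Set α := fun i => C i.castSucc
    set c := C (Fin.last m)
    have step : ∀ k, H (coverSuperlevel C (k + 1)) + H (coverSuperlevel T (k + 1) ∩ c) ≤
        H (coverSuperlevel T (k + 1)) + H (coverSuperlevel T k ∩ c) := fun k => by
      have hsub := coverSuperlevel_antitone T k.le_succ
      have := hH (coverSuperlevel T (k + 1)) (coverSuperlevel T k ∩ c)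
      rwa [← inter_assoc, inter_eq_left.mpr hsub, ← coverSuperlevel_succ_castSucc,
        add_comm] at this
    calc ∑ k ∈ Finset.range (m + 1), H (coverSuperlevel C (k + 1))
        = ∑ k ∈ Finset.range m, H (coverSuperlevel C (k + 1)) +
            H (coverSuperlevel T m ∩ c) := by
          rw [Finset.sum_range_succ, coverSuperlevel_succ_castSucc,
            coverSuperlevel_eq_empty (by simp), empty_union]
      _ ≤ ∑ k ∈ Finset.range m, H (coverSuperlevel T (k + 1)) +
            H (coverSuperlevel T 0 ∩ c) :=
          Finset.sum_range_add_le_sum_range_add (x := fun k => H (coverSuperlevel T k ∩ c))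
            fun k _ => step k
      _ ≤ ∑ i, H (T i) + H c := by
          rw [coverSuperlevel_zero, univ_inter]
          gcongr
          exact hH.sum_range_coverSuperlevel_le T
      _ = ∑ i, H (C i) := (Fin.sum_univ_castSucc fun i => H (C i)).symm

theorem Monotone.eq_coverSuperlevel_rev {m : ℕ} {A : Fin m → Set α} (hA : Monotone A)
    (i : Fin m) : A i = coverSuperlevel A (i.rev + 1) := by
  classical
  ext x
  simp only [coverSuperlevel, mem_ofPred_eq, coverCount_eq_card, Fin.val_rev]
  constructor
  · intro hx
    have := Finset.card_le_card fun j (hj : j ∈ Finset.Ici i) =>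
      (Finset.mem_filter_univ j).mpr (hA (Finset.mem_Ici.mp hj) hx)
    rw [Fin.card_Ici] at this
    omega
  · intro hcard
    by_contra hx
    have := Finset.card_le_card fun j (hj : j ∈ ({j | x ∈ A j} : Finset (Fin m))) =>
      Finset.mem_Ioi.mpr (lt_of_not_ge fun hji => hx (hA hji ((Finset.mem_filter_univ j).mp hj)))
    rw [Fin.card_Ioi] at this
    omega

end Fin

/-- For a strongly subadditive set function, the nested rearrangement
`A_1 ⊆ … ⊆ A_n` with the same sum of characteristic functions as `C_1, …, C_n` has no
larger total capacity. -/
theorem stronglySubadditive_nested_rearrangement {d : ℕ}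
    (H : Set (EuclideanSpace ℝ (Fin d)) → ℝ≥0∞) (hssa : StronglySubadditive H)
    (n : ℕ) (C A : Fin (n + 1) → Set (EuclideanSpace ℝ (Fin d)))
    (hnested : ∀ i j : Fin (n + 1), i ≤ j → A i ⊆ A j)
    (hsum : ∀ x, (∑ i, (A i).indicator (fun _ => (1 : ℕ)) x) =
      ∑ i, (C i).indicator (fun _ => (1 : ℕ)) x) :
    ∑ i, H (A i) ≤ ∑ i, H (C i) := by
  have hcount : coverCount A = coverCount C := funext hsum
  have hlevel : coverSuperlevel A = coverSuperlevel C := by unfold coverSuperlevel; rw [hcount]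
  have hA (i : Fin (n + 1)) : A i = coverSuperlevel C (i.rev + 1) :=
    hlevel ▸ Monotone.eq_coverSuperlevel_rev (fun i j => hnested i j) i
  calc ∑ i, H (A i) = ∑ i : Fin (n + 1), H (coverSuperlevel C (i + 1)) := by
        simp_rw [hA]
        exact Fintype.sum_equiv Fin.revPerm _ _ fun _ => rfl
    _ = ∑ k ∈ Finset.range (n + 1), H (coverSuperlevel C (k + 1)) :=
        Fin.sum_univ_eq_sum_range (fun k => H (coverSuperlevel C (k + 1))) _
    _ ≤ ∑ i, H (C i) := hssa.sum_range_coverSuperlevel_le C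
end

section
/- Suppose H : 𝒫(ℝ^d) → [0,∞] is monotone and strongly subadditive. If f, g : ℝ^d → ℕ/k := {m/k : m ∈ ℕ} for some positive integer k, then ∫(f+g) dH ≤ ∫f dH + ∫g dH. -/
open MeasureTheory Filter Set Topology
open scoped ENNReal

/-!
Write `f = F / k` and `g = G / k` with `F, G` integer valued. On each interval `[j/k, (j+1)/k)`
the level set `{f > t}` is `{F > j}`, so `k ∫ f dH` is the layer sum `∑ⱼ H {F > j}`, and it
suffices to show that layer sums are subadditive. Adding a single indicator `1_B` to `F` raises
the layer sum by at most `H B`: strong subadditivity applied to `{F > n}` and `{F ≥ n} ∩ B` gives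
an inequality that telescopes in `n`. Writing `min G m` as a sum of `m` such indicators
`1_{G > j}` and letting `m → ∞` gives the general case.
-/

theorem ENNReal.tsum_le_tsum_add_of_telescoping {u v c : ℕ → ℝ≥0∞}
    (h : ∀ n, u n + c (n + 1) ≤ v n + c n) : ∑' n, u n ≤ ∑' n, v n + c 0 := by
  have partial_sums : ∀ N, ∑ n ∈ Finset.range N, u n + c N ≤ ∑ n ∈ Finset.range N, v n + c 0 := by
    intro N
    induction N with
    | zero => simp
    | succ N ih =>
      calc ∑ n ∈ Finset.range (N + 1), u n + c (N + 1)
          = ∑ n ∈ Finset.range N, u n + (u N + c (N + 1)) := by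
            rw [Finset.sum_range_succ, add_assoc]
        _ ≤ ∑ n ∈ Finset.range N, u n + (v N + c N) := add_le_add le_rfl (h N)
        _ = (∑ n ∈ Finset.range N, u n + c N) + v N := by ring
        _ ≤ (∑ n ∈ Finset.range N, v n + c 0) + v N := by gcongr
        _ = ∑ n ∈ Finset.range (N + 1), v n + c 0 := by rw [Finset.sum_range_succ]; ring
  rw [ENNReal.tsum_eq_iSup_nat]
  exact iSup_le fun N => le_self_add.trans <| (partial_sums N).trans <| by
    gcongr; exact ENNReal.sum_le_tsum _

section LayerSum

variable {α : Type*} {H : Set α → ℝ≥0∞}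

noncomputable def layerSum (H : Set α → ℝ≥0∞) (F : α → ℕ) : ℝ≥0∞ :=
  ∑' j : ℕ, H {x | j < F x}

theorem layerSum_add_indicator_le (hH : StronglySubadditive H) (F : α → ℕ) (B : Set α) :
    layerSum H (fun x => F x + B.indicator 1 x) ≤ layerSum H F + H B := by
  have hB : H ({x | 0 ≤ F x} ∩ B) = H B := by simp
  rw [← hB]
  refine ENNReal.tsum_le_tsum_add_of_telescoping (c := fun n => H ({x | n ≤ F x} ∩ B)) fun n => ?_
  have hlevel : {x | n < F x + B.indicator 1 x} = {x | n < F x} ∪ ({x | n ≤ F x} ∩ B) := by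
    ext x
    by_cases hx : x ∈ B
    · simpa [hx] using Nat.le_of_lt
    · simp [hx]
  have hcap : {x | n < F x} ∩ ({x | n ≤ F x} ∩ B) = {x | n + 1 ≤ F x} ∩ B := by
    ext x
    by_cases hx : x ∈ B
    · simpa [hx] using Nat.le_of_lt
    · simp [hx]
  have h := hH {x | n < F x} ({x | n ≤ F x} ∩ B)
  rw [hcap, ← hlevel, add_comm] at h
  exact h

theorem layerSum_add_min_le (hH : StronglySubadditive H) (F G : α → ℕ) (m : ℕ) :
    layerSum H (fun x => F x + min (G x) m)
      ≤ layerSum H F + ∑ j ∈ Finset.range m, H {x | j < G x} := by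
  induction m with
  | zero => simp
  | succ m ih =>
    have hsplit : (fun x => F x + min (G x) (m + 1))
        = fun x => (F x + min (G x) m) + {x | m < G x}.indicator 1 x := by
      funext x
      by_cases hx : m < G x <;> simp [hx] <;> omega
    calc layerSum H (fun x => F x + min (G x) (m + 1))
        ≤ layerSum H (fun x => F x + min (G x) m) + H {x | m < G x} := by
          rw [hsplit]; exact layerSum_add_indicator_le hH _ _
      _ ≤ layerSum H F + ∑ j ∈ Finset.range m, H {x | j < G x} + H {x | m < G x} := by gcongr
      _ = layerSum H F + ∑ j ∈ Finset.range (m + 1), H {x | j < G x} := by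
          rw [Finset.sum_range_succ, add_assoc]

theorem layerSum_add_le (hH : StronglySubadditive H) (F G : α → ℕ) :
    layerSum H (fun x => F x + G x) ≤ layerSum H F + layerSum H G := by
  rw [layerSum, ENNReal.tsum_eq_iSup_nat]
  refine iSup_le fun N => ?_
  have htrunc : ∀ j ∈ Finset.range N, {x | j < F x + G x} = {x | j < F x + min (G x) N} := by
    intro j hj
    ext x
    simp only [Finset.mem_range, mem_ofPred_eq] at hj ⊢
    omega
  calc ∑ j ∈ Finset.range N, H {x | j < F x + G x}
      = ∑ j ∈ Finset.range N, H {x | j < F x + min (G x) N} :=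
        Finset.sum_congr rfl fun j hj => by rw [htrunc j hj]
    _ ≤ layerSum H (fun x => F x + min (G x) N) := ENNReal.sum_le_tsum _
    _ ≤ layerSum H F + ∑ j ∈ Finset.range N, H {x | j < G x} := layerSum_add_min_le hH F G N
    _ ≤ layerSum H F + layerSum H G := by gcongr; exact ENNReal.sum_le_tsum _

theorem choquet_natCast_div (F : α → ℕ) {k : ℕ} (hk : 0 < k) :
    choquet H (fun x => (F x : ℝ≥0∞) / k) = layerSum H F / k := by
  have hkR : (0 : ℝ) < k := by exact_mod_cast hk
  have hmono : Monotone fun j : ℕ => (j : ℝ) / k := fun i j hij =>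
    div_le_div_of_nonneg_right (Nat.cast_le.2 hij) hkR.le
  have hcover : ⋃ j : ℕ, Ico ((j : ℝ) / k) ((j + 1 : ℕ) / k) = Ici 0 := by
    simpa using iUnion_Ico_map_succ_eq_Ici (f := fun j : ℕ => (j : ℝ) / k) (fun j => hmono bot_le)
      (not_bddAbove_iff.2 fun r => ⟨_, ⟨⌈r * k⌉₊ + 1, rfl⟩, by
        rw [lt_div_iff₀ hkR]; push_cast; linarith [Nat.le_ceil (r * k)]⟩)
  have hlevel : ∀ j : ℕ, ∀ t ∈ Ico ((j : ℝ) / k) ((j + 1 : ℕ) / k),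
      H {x | ENNReal.ofReal t < (F x : ℝ≥0∞) / k} = H {x | j < F x} := by
    intro j t ⟨hjt, htj⟩
    rw [div_le_iff₀ hkR] at hjt
    rw [lt_div_iff₀ hkR] at htj
    have ht0 : 0 ≤ t := by nlinarith [(Nat.cast_nonneg j : (0 : ℝ) ≤ j)]
    congr 1
    ext x
    rw [mem_ofPred_eq, mem_ofPred_eq, ← ENNReal.ofReal_natCast, ← ENNReal.ofReal_natCast k,
      ← ENNReal.ofReal_div_of_pos hkR, ENNReal.ofReal_lt_ofReal_iff_of_nonneg ht0,
      lt_div_iff₀ hkR]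
    constructor
    · intro h
      exact_mod_cast hjt.trans_lt h
    · intro h
      exact htj.trans_le (by exact_mod_cast h)
  calc choquet H (fun x => (F x : ℝ≥0∞) / k)
      = ∫⁻ t in Ici 0, H {x | ENNReal.ofReal t < (F x : ℝ≥0∞) / k} :=
        setLIntegral_congr Ioi_ae_eq_Ici
    _ = ∑' j : ℕ, ∫⁻ t in Ico ((j : ℝ) / k) ((j + 1 : ℕ) / k),
          H {x | ENNReal.ofReal t < (F x : ℝ≥0∞) / k} := by
        rw [← hcover]
        exact lintegral_iUnion (fun _ => measurableSet_Ico) hmono.pairwise_disjoint_on_Ico_succ _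
    _ = ∑' j : ℕ, H {x | j < F x} * (k : ℝ≥0∞)⁻¹ := by
        refine tsum_congr fun j => ?_
        rw [setLIntegral_congr_fun measurableSet_Ico (hlevel j), setLIntegral_const, Real.volume_Ico,
          Nat.cast_add_one, add_div, add_sub_cancel_left, one_div,
          ENNReal.ofReal_inv_of_pos hkR, ENNReal.ofReal_natCast]
    _ = layerSum H F / k := by rw [ENNReal.tsum_mul_right, div_eq_mul_inv, layerSum]

end LayerSum

theorem choquet_sublinear_discreteValued_general {d : ℕ}
    (H : Set (EuclideanSpace ℝ (Fin d)) → ℝ≥0∞)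
    (hssa : StronglySubadditive H)
    (k : ℕ) (hk : 0 < k) (f g : EuclideanSpace ℝ (Fin d) → ℝ≥0∞)
    (hf : ∀ x, ∃ m : ℕ, f x = (m : ℝ≥0∞) / (k : ℝ≥0∞))
    (hg : ∀ x, ∃ m : ℕ, g x = (m : ℝ≥0∞) / (k : ℝ≥0∞)) :
    choquet H (fun x => f x + g x) ≤ choquet H f + choquet H g := by
  choose F hF using hf
  choose G hG using hg
  have hfg : (fun x => f x + g x) = fun x => ((F x + G x : ℕ) : ℝ≥0∞) / k := by
    funext x
    rw [hF, hG, Nat.cast_add, ENNReal.div_add_div_same]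
  rw [hfg, funext hF, funext hG, choquet_natCast_div _ hk, choquet_natCast_div _ hk,
    choquet_natCast_div _ hk, ← ENNReal.add_div]
  exact ENNReal.div_le_div_right (layerSum_add_le hssa F G) _

/-- Sublinearity of the Choquet integral for functions with values in
`ℕ/k = {m/k : m ∈ ℕ}`. -/
theorem choquet_sublinear_discreteValued {d : ℕ}
    (H : Set (EuclideanSpace ℝ (Fin d)) → ℝ≥0∞)
    (hmono : MonotoneSF H) (hssa : StronglySubadditive H)
    (k : ℕ) (hk : 0 < k) (f g : EuclideanSpace ℝ (Fin d) → ℝ≥0∞)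
    (hf : ∀ x, ∃ m : ℕ, f x = (m : ℝ≥0∞) / (k : ℝ≥0∞))
    (hg : ∀ x, ∃ m : ℕ, g x = (m : ℝ≥0∞) / (k : ℝ≥0∞)) :
    choquet H (fun x => f x + g x) ≤ choquet H f + choquet H g :=
  choquet_sublinear_discreteValued_general H hssa k hk f g hf hg
end

section
/- Suppose H : 𝒫(ℝ^d) → [0,∞] is monotone and finitely subadditive. If f : ℝ^d → [0,∞] is quasicontinuous, then for every locally finite nonnegative Borel measure μ on ℝ^d satisfying μ(U) ≤ H(U) for every open set U ⊆ ℝ^d, one has ∫f dμ ≤ ∫f dH. -/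
open MeasureTheory Filter Set Topology
open scoped ENNReal

/-! If `f` is continuous off an open set `ω`, then `{f > t} ∪ ω` is open, so
`μ {f > t} ≤ H ({f > t} ∪ ω) ≤ H {f > t} + H ω`; quasicontinuity makes `H ω` arbitrarily
small. Integrating in `t` (layer-cake formula) gives the inequality. The same sets `ω` have
μ-null intersection, which makes `f` μ-a.e. measurable. -/

theorem lintegral_eq_lintegral_meas_ofReal_lt {α : Type*} [MeasurableSpace α] (μ : Measure α)
    {f : α → ℝ≥0∞}
    (hf : AEMeasurable f μ) :
    ∫⁻ x, f x ∂μ = ∫⁻ t in Ioi (0 : ℝ), μ {x | ENNReal.ofReal t < f x} := by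
  by_cases hinf : μ {x | f x = ∞} = 0
  · have hfin : ∀ᵐ x ∂μ, f x ≠ ∞ := measure_eq_zero_iff_ae_notMem.mp hinf
    calc ∫⁻ x, f x ∂μ = ∫⁻ x, ENNReal.ofReal (f x).toReal ∂μ :=
          lintegral_congr_ae <| hfin.mono fun x hx => (ENNReal.ofReal_toReal hx).symm
      _ = ∫⁻ t in Ioi (0 : ℝ), μ {x | t < (f x).toReal} :=
          lintegral_eq_lintegral_meas_lt μ (ae_of_all _ fun _ => ENNReal.toReal_nonneg)
            hf.ennreal_toReal
      _ = ∫⁻ t in Ioi (0 : ℝ), μ {x | ENNReal.ofReal t < f x} := by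
          refine setLIntegral_congr_fun measurableSet_Ioi fun t ht => measure_congr ?_
          filter_upwards [hfin] with x hx
          exact propext (ENNReal.ofReal_lt_iff_lt_toReal (le_of_lt ht) hx).symm
  · have hsuper : ∀ t : ℝ, μ {x | f x = ∞} ≤ μ {x | ENNReal.ofReal t < f x} := fun t =>
      measure_mono fun x hx => by simp_all [ENNReal.ofReal_lt_top]
    rw [lintegral_eq_top_of_measure_eq_top_ne_zero hf hinf]
    refine (top_unique ?_).symm
    calc ∞ = ∫⁻ _ in Ioi (0 : ℝ), μ {x | f x = ∞} := by
          rw [setLIntegral_const, Real.volume_Ioi, ENNReal.mul_top hinf]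
      _ ≤ ∫⁻ t in Ioi (0 : ℝ), μ {x | ENNReal.ofReal t < f x} := lintegral_mono hsuper

theorem ContinuousOn.isOpen_preimage_union {α β : Type*} [TopologicalSpace α]
    [TopologicalSpace β] {f : α → β} {ω : Set α} (hf : ContinuousOn f ωᶜ) (hω : IsOpen ω)
    {V : Set β} (hV : IsOpen V) : IsOpen (f ⁻¹' V ∪ ω) := by
  obtain ⟨U, hU, hUeq⟩ := continuousOn_iff'.mp hf V hV
  convert hU.union hω using 1
  ext x
  by_cases hx : x ∈ ω <;> simp_all [Set.ext_iff]

section OpenDomination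

variable {α : Type*} [TopologicalSpace α] [MeasurableSpace α] {H : Set α → ℝ≥0∞}
  {μ : Measure α}

theorem measure_le_of_forall_isOpen_union (hμH : ∀ U, IsOpen U → μ U ≤ H U)
    (hsub : FinitelySubadditive H) {E : Set α}
    (hE : ∀ ε : ℝ, 0 < ε → ∃ ω, H ω ≤ ENNReal.ofReal ε ∧ IsOpen (E ∪ ω)) : μ E ≤ H E := by
  refine ENNReal.le_of_forall_pos_le_add fun ε hε _ => ?_
  obtain ⟨ω, hωH, hEω⟩ := hE ε hε
  calc μ E ≤ μ (E ∪ ω) := measure_mono subset_union_left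
    _ ≤ H (E ∪ ω) := hμH _ hEω
    _ ≤ H E + H ω := hsub E ω
    _ ≤ H E + ε := by rw [ENNReal.ofReal_coe_nnreal] at hωH; gcongr

theorem QuasicontinuousENN.measure_preimage_le {f : α → ℝ≥0∞} (hf : QuasicontinuousENN H f)
    (hμH : ∀ U, IsOpen U → μ U ≤ H U) (hsub : FinitelySubadditive H) {V : Set ℝ≥0∞}
    (hV : IsOpen V) : μ (f ⁻¹' V) ≤ H (f ⁻¹' V) :=
  measure_le_of_forall_isOpen_union hμH hsub fun ε hε =>
    let ⟨ω, hω, hωH, _, hcont⟩ := hf ε hε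
    ⟨ω, hωH, hcont.isOpen_preimage_union hω hV⟩

theorem QuasicontinuousENN.aemeasurable [OpensMeasurableSpace α] {f : α → ℝ≥0∞}
    (hf : QuasicontinuousENN H f) (hμH : ∀ U, IsOpen U → μ U ≤ H U) : AEMeasurable f μ := by
  choose ω hω hωH _ hcont using fun n : ℕ => hf (1 / (n + 1)) Nat.one_div_pos_of_nat
  have hsmall : Tendsto (fun n : ℕ => ENNReal.ofReal (1 / (n + 1))) atTop (𝓝 0) := by
    simpa using ENNReal.tendsto_ofReal tendsto_one_div_add_atTop_nhds_zero_nat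
  have hnull : μ (⋂ n, ω n) = 0 := le_antisymm (ge_of_tendsto' hsmall fun n =>
    (measure_mono (iInter_subset _ n)).trans ((hμH _ (hω n)).trans (hωH n))) bot_le
  have hcover : μ.restrict (⋃ n, (ω n)ᶜ) = μ :=
    Measure.restrict_eq_self_of_ae_mem <|
      (measure_eq_zero_iff_ae_notMem.mp hnull).mono fun x hx => by simpa using hx
  rw [← hcover, aemeasurable_iUnion_iff]
  exact fun n => (hcont n).aemeasurable (hω n).isClosed_compl.measurableSet

end OpenDomination

theorem lintegral_le_choquet_general {d : ℕ}
    (H : Set (EuclideanSpace ℝ (Fin d)) → ℝ≥0∞)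
    (hsub : FinitelySubadditive H)
    (f : EuclideanSpace ℝ (Fin d) → ℝ≥0∞) (hf : QuasicontinuousENN H f)
    (μ : MeasureTheory.Measure (EuclideanSpace ℝ (Fin d)))
    (hμH : ∀ U : Set (EuclideanSpace ℝ (Fin d)), IsOpen U → μ U ≤ H U) :
    ∫⁻ x, f x ∂μ ≤ choquet H f := by
  rw [lintegral_eq_lintegral_meas_ofReal_lt μ (hf.aemeasurable hμH), choquet]
  exact lintegral_mono fun t => hf.measure_preimage_le hμH hsub isOpen_Ioi

/-- For a quasicontinuous `f : ℝ^d → [0,∞]` and a locally finite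
nonnegative Borel measure `μ ≤ H` on open sets, the Lebesgue integral of `f` with
respect to `μ` is at most the Choquet integral of `f`. -/
theorem lintegral_le_choquet {d : ℕ}
    (H : Set (EuclideanSpace ℝ (Fin d)) → ℝ≥0∞)
    (hmono : MonotoneSF H) (hsub : FinitelySubadditive H)
    (f : EuclideanSpace ℝ (Fin d) → ℝ≥0∞) (hf : QuasicontinuousENN H f)
    (μ : MeasureTheory.Measure (EuclideanSpace ℝ (Fin d)))
    (hloc : MeasureTheory.IsLocallyFiniteMeasure μ)
    (hμH : ∀ U : Set (EuclideanSpace ℝ (Fin d)), IsOpen U → μ U ≤ H U) :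
    ∫⁻ x, f x ∂μ ≤ choquet H f :=
  lintegral_le_choquet_general H hsub f hf μ hμH
end
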